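/- arXiv:2301.01695 — 2 statements merged into one kernel-verified Lean document; each statement's English description precedes it below -/
import Mathlib

section
/- Let $\{(a_i,b_i)\}_{i=1}^{k}$ be pairs of integers with $b_i > 0$ such that the fractions $a_i/b_i$ are nonincreasing in $i$. Let $m = (\sum_i a_i)/(\sum_i b_i)$ be the mediant of the fractions, and let $\delta$ be the maximum over $i$ of the successive differences $a_i/b_i - a_{i+1}/b_{i+1}$ (with $\delta = 0$ if $k = 1$). Then for every index $i$ one has $|a_i/b_i - m| \le (\delta/2) \sum_{j=1}^{k} b_j$. -/
private lemma big_sum_sq (c : ℕ → ℚ) : ∀ k : ℕ, (∀ l, l < k → 0 ≤ c l) →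
    ∑ j ∈ Finset.range k, (∑ l ∈ Finset.range j, c l) * c j
      ≤ (∑ j ∈ Finset.range k, c j) ^ 2 / 2 := by
  intro k
  induction k with
  | zero => intro _; simp
  | succ k ih =>
    intro hc
    rw [Finset.sum_range_succ, Finset.sum_range_succ (f := c)]
    have h1 : 0 ≤ c k := hc k (Nat.lt_succ_self k)
    have h2 : 0 ≤ ∑ l ∈ Finset.range k, c l :=
      Finset.sum_nonneg (fun l hl => hc l (by simpa using Nat.lt_succ_of_lt (Finset.mem_range.mp hl)))
    nlinarith [ih (fun l hl => hc l (Nat.lt_succ_of_lt hl))]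

private lemma lower_pairs (c : ℕ → ℚ) (k i : ℕ) (hc : ∀ l, l < k → 0 ≤ c l) :
    ∑ j ∈ Finset.range k, c j * ∑ l ∈ Finset.Ico i j, c l
      ≤ (∑ j ∈ Finset.range k, c j) ^ 2 / 2 := by
  refine le_trans (Finset.sum_le_sum (fun j hj => ?_)) (big_sum_sq c k hc)
  have hjk : j < k := Finset.mem_range.mp hj
  rw [mul_comm]
  refine mul_le_mul_of_nonneg_right ?_ (hc j hjk)
  exact Finset.sum_le_sum_of_subset_of_nonneg
    (fun l hl => Finset.mem_range.mpr (Finset.mem_Ico.mp hl).2)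
    (fun l hl _ => hc l (lt_trans (Finset.mem_range.mp hl) hjk))

private lemma upper_pairs (c : ℕ → ℚ) (k i : ℕ) (hc : ∀ l, l < k → 0 ≤ c l) (hik : i < k) :
    ∑ j ∈ Finset.range k, c j * ∑ l ∈ Finset.Ioc j i, c l
      ≤ (∑ j ∈ Finset.range k, c j) ^ 2 / 2 := by
  have hIoc : ∀ j : ℕ, Finset.Ioc j i = (Finset.range k).filter (fun l => j < l ∧ l ≤ i) := by
    intro j
    ext l
    simp only [Finset.mem_Ioc, Finset.mem_filter, Finset.mem_range]
    omega
  calc ∑ j ∈ Finset.range k, c j * ∑ l ∈ Finset.Ioc j i, c l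
      = ∑ j ∈ Finset.range k, ∑ l ∈ Finset.range k,
          if j < l ∧ l ≤ i then c j * c l else 0 := by
        refine Finset.sum_congr rfl (fun j _ => ?_)
        rw [hIoc j, Finset.mul_sum, Finset.sum_filter]
    _ = ∑ l ∈ Finset.range k, ∑ j ∈ Finset.range k,
          if j < l ∧ l ≤ i then c j * c l else 0 := Finset.sum_comm
    _ ≤ ∑ l ∈ Finset.range k, (∑ j ∈ Finset.range l, c j) * c l := by
        refine Finset.sum_le_sum (fun l hl => ?_)
        have hlk : l < k := Finset.mem_range.mp hl
        rw [← Finset.sum_filter, Finset.sum_mul]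
        refine Finset.sum_le_sum_of_subset_of_nonneg ?_
          (fun j hj _ => mul_nonneg (hc j (lt_trans (Finset.mem_range.mp hj) hlk)) (hc l hlk))
        intro j hj
        simp only [Finset.mem_filter, Finset.mem_range] at hj ⊢
        exact hj.2.1
    _ ≤ _ := big_sum_sq c k hc

/-- **mediant bound.**
Let `{(aᵢ, bᵢ)}_{i=1}^k` be pairs of integers with `bᵢ > 0` such that the fractions
`aᵢ/bᵢ` are nonincreasing in `i`.  Let `m = (∑ aᵢ)/(∑ bᵢ)` be the mediant of the
fractions and let `δ` be the maximum of the successive differences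
`aᵢ/bᵢ - a_{i+1}/b_{i+1}` (with `δ = 0` if `k = 1`).  Then for every index `i` one has
`|aᵢ/bᵢ - m| ≤ (δ/2) ∑ⱼ bⱼ`. -/
theorem mediant_slope_bound
    (k : ℕ) (hk : 0 < k) (a : ℕ → ℤ) (b : ℕ → ℤ)
    (hb : ∀ i < k, 0 < b i)
    (hmono : ∀ i, i + 1 < k →
      (a (i + 1) : ℚ) / (b (i + 1) : ℚ) ≤ (a i : ℚ) / (b i : ℚ))
    (m : ℚ)
    (hm : m = (∑ i ∈ Finset.range k, (a i : ℚ)) / (∑ i ∈ Finset.range k, (b i : ℚ)))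
    (δ : ℚ)
    (hδ_ub : ∀ i, i + 1 < k →
      (a i : ℚ) / (b i : ℚ) - (a (i + 1) : ℚ) / (b (i + 1) : ℚ) ≤ δ)
    (hδ_max : (k = 1 ∧ δ = 0) ∨
      (1 < k ∧ ∃ i, i + 1 < k ∧
        δ = (a i : ℚ) / (b i : ℚ) - (a (i + 1) : ℚ) / (b (i + 1) : ℚ))) :
    ∀ i < k, |(a i : ℚ) / (b i : ℚ) - m| ≤ δ / 2 * ∑ j ∈ Finset.range k, (b j : ℚ) := by
  set f : ℕ → ℚ := fun j => (a j : ℚ) / (b j : ℚ) with hf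
  set S : ℚ := ∑ j ∈ Finset.range k, (b j : ℚ) with hSdef
  have hbQ : ∀ l, l < k → (1 : ℚ) ≤ (b l : ℚ) := by
    intro l hl; exact_mod_cast hb l hl
  have hbnn : ∀ l, (0 : ℚ) ≤ (b l : ℚ) ∨ True := fun l => Or.inr trivial
  have hbpos : ∀ l, l < k → (0 : ℚ) < (b l : ℚ) := fun l hl =>
    lt_of_lt_of_le zero_lt_one (hbQ l hl)
  have hS : 0 < S :=
    Finset.sum_pos (fun l hl => hbpos l (Finset.mem_range.mp hl))
      ⟨0, Finset.mem_range.mpr hk⟩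
  have hδ0 : 0 ≤ δ := by
    rcases hδ_max with ⟨_, h⟩ | ⟨_, i, hi, h⟩
    · exact h.ge
    · rw [h]; linarith [hmono i hi]
  -- gap lemma and monotonicity in one induction
  have gap : ∀ d p, p + d < k → f p - f (p + d) ≤ δ * d ∧ f (p + d) ≤ f p := by
    intro d
    induction d with
    | zero => intro p _; simp
    | succ d ih =>
      intro p hp
      have hpd : p + d < k := by omega
      obtain ⟨h1, h2⟩ := ih p hpd
      have h3 := hmono (p + d) (by omega)
      have h4 := hδ_ub (p + d) (by omega)
      have e : p + (d + 1) = (p + d) + 1 := by ring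
      rw [e]
      push_cast
      constructor
      · simp only [hf] at *; linarith
      · simp only [hf] at *; linarith
  have mono : ∀ p q, p ≤ q → q < k → f q ≤ f p := by
    intro p q hpq hq
    have := (gap (q - p) p (by omega)).2
    rwa [Nat.add_sub_cancel' hpq] at this
  intro i hik
  -- key difference bounds
  have key1 : ∀ j, j < k → f j - f i ≤ δ * ∑ l ∈ Finset.Ioc j i, (b l : ℚ) := by
    intro j hj
    have hcard : ((Finset.Ioc j i).card : ℚ) ≤ ∑ l ∈ Finset.Ioc j i, (b l : ℚ) := by
      rw [Finset.card_eq_sum_ones]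
      push_cast
      refine Finset.sum_le_sum (fun l hl => ?_)
      exact hbQ l (lt_of_le_of_lt (Finset.mem_Ioc.mp hl).2 hik)
    have hstep : f j - f i ≤ δ * ((Finset.Ioc j i).card : ℚ) := by
      rw [Nat.card_Ioc]
      rcases le_or_gt i j with h | h
      · have := mono i j h hj
        simp only [Nat.sub_eq_zero_of_le h]
        push_cast; linarith
      · have := (gap (i - j) j (by omega)).1
        rw [Nat.add_sub_cancel' h.le] at this
        exact this
    exact hstep.trans (mul_le_mul_of_nonneg_left hcard hδ0)
  have key2 : ∀ j, j < k → f i - f j ≤ δ * ∑ l ∈ Finset.Ico i j, (b l : ℚ) := by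
    intro j hj
    have hcard : ((Finset.Ico i j).card : ℚ) ≤ ∑ l ∈ Finset.Ico i j, (b l : ℚ) := by
      rw [Finset.card_eq_sum_ones]
      push_cast
      refine Finset.sum_le_sum (fun l hl => ?_)
      exact hbQ l (lt_of_lt_of_le (Finset.mem_Ico.mp hl).2 hj.le)
    have hstep : f i - f j ≤ δ * ((Finset.Ico i j).card : ℚ) := by
      rw [Nat.card_Ico]
      rcases le_or_gt j i with h | h
      · have := mono j i h hik
        simp only [Nat.sub_eq_zero_of_le h]
        push_cast; linarith
      · have := (gap (j - i) i (by omega)).1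
        rw [Nat.add_sub_cancel' h.le] at this
        exact this
    exact hstep.trans (mul_le_mul_of_nonneg_left hcard hδ0)
  -- the sum identity
  have habf : ∀ j, j < k → (b j : ℚ) * (f j - f i) = (a j : ℚ) - (b j : ℚ) * f i := by
    intro j hj
    have hbne : (b j : ℚ) ≠ 0 := (hbpos j hj).ne'
    simp only [hf]
    field_simp
  have hsum : ∑ j ∈ Finset.range k, (b j : ℚ) * (f j - f i) = S * (m - f i) := by
    rw [Finset.sum_congr rfl (fun j hj => habf j (Finset.mem_range.mp hj)),
      Finset.sum_sub_distrib, ← Finset.sum_mul, hm]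
    rw [mul_sub]
    rw [mul_div_cancel₀ _ hS.ne']
  -- upper bound on m - f i
  have up : S * (m - f i) ≤ δ * (S ^ 2 / 2) := by
    rw [← hsum]
    calc ∑ j ∈ Finset.range k, (b j : ℚ) * (f j - f i)
        ≤ ∑ j ∈ Finset.range k, (b j : ℚ) * (δ * ∑ l ∈ Finset.Ioc j i, (b l : ℚ)) := by
          refine Finset.sum_le_sum (fun j hj => ?_)
          exact mul_le_mul_of_nonneg_left (key1 j (Finset.mem_range.mp hj))
            (hbpos j (Finset.mem_range.mp hj)).le
      _ = δ * ∑ j ∈ Finset.range k, (b j : ℚ) * ∑ l ∈ Finset.Ioc j i, (b l : ℚ) := by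
          rw [Finset.mul_sum]; refine Finset.sum_congr rfl (fun j _ => ?_); ring
      _ ≤ δ * (S ^ 2 / 2) := by
          refine mul_le_mul_of_nonneg_left ?_ hδ0
          exact upper_pairs (fun l => (b l : ℚ)) k i (fun l hl => (hbpos l hl).le) hik
  have dn : S * (f i - m) ≤ δ * (S ^ 2 / 2) := by
    have hsum' : ∑ j ∈ Finset.range k, (b j : ℚ) * (f i - f j) = S * (f i - m) := by
      have : ∀ j, (b j : ℚ) * (f i - f j) = -((b j : ℚ) * (f j - f i)) := fun j => by ring
      simp only [this, Finset.sum_neg_distrib, hsum]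
      ring
    rw [← hsum']
    calc ∑ j ∈ Finset.range k, (b j : ℚ) * (f i - f j)
        ≤ ∑ j ∈ Finset.range k, (b j : ℚ) * (δ * ∑ l ∈ Finset.Ico i j, (b l : ℚ)) := by
          refine Finset.sum_le_sum (fun j hj => ?_)
          exact mul_le_mul_of_nonneg_left (key2 j (Finset.mem_range.mp hj))
            (hbpos j (Finset.mem_range.mp hj)).le
      _ = δ * ∑ j ∈ Finset.range k, (b j : ℚ) * ∑ l ∈ Finset.Ico i j, (b l : ℚ) := by
          rw [Finset.mul_sum]; refine Finset.sum_congr rfl (fun j _ => ?_); ring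
      _ ≤ δ * (S ^ 2 / 2) := by
          refine mul_le_mul_of_nonneg_left ?_ hδ0
          exact lower_pairs (fun l => (b l : ℚ)) k i (fun l hl => (hbpos l hl).le)
  rw [abs_sub_le_iff]
  constructor
  · nlinarith [dn]
  · nlinarith [up]
end

section
/- Let $V$ be a finite-dimensional real vector space equipped with a full-rank discrete lattice $\Lambda$, let $\mathcal{C} \subset V$ be a rational polyhedral cone, let $Q \subset V$ be a compact subset, and let $S \subset \Lambda$ be a subset with $S \subset Q + \mathcal{C}$. Then there exists a finite set of elements $s_1, \dots, s_r \in S$ such that every element of $S$ can be written as $s_i + c$ for some index $i$ and some $c \in \mathcal{C} \cap \Lambda$. -/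
open Pointwise

private def pwoChain {α : Type*} [DecidableEq α] (φ : Finset α → α) : ℕ → Finset α
  | 0 => ∅
  | n + 1 => insert (φ (pwoChain φ n)) (pwoChain φ n)

/-- A partially well-ordered set has a finite "basis": finitely many elements
below every element. -/
theorem pwo_exists_basis {α : Type*} [Inhabited α] {s : Set α} {r : α → α → Prop}
    (h : s.PartiallyWellOrderedOn r) :
    ∃ t : Finset α, ↑t ⊆ s ∧ ∀ x ∈ s, ∃ y ∈ t, r y x := by
  by_contra hc
  push_neg at hc
  classical
  let φ : Finset α → α := fun t =>
    if h' : (t : Set α) ⊆ s then (hc t h').choose else default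
  have hφ : ∀ t : Finset α, (t : Set α) ⊆ s →
      φ t ∈ s ∧ ∀ y ∈ t, ¬ r y (φ t) := by
    intro t ht
    simp only [φ, dif_pos ht]
    obtain ⟨h1, h2⟩ := (hc t ht).choose_spec
    exact ⟨h1, h2⟩
  have hTs : ∀ n, (pwoChain φ n : Set α) ⊆ s := by
    intro n
    induction n with
    | zero => simp [pwoChain]
    | succ n ih =>
      rw [pwoChain]
      push_cast
      exact Set.insert_subset ((hφ _ ih).1) ih
  have hmono : ∀ m n, m ≤ n → pwoChain φ m ⊆ pwoChain φ n := by
    intro m n hmn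
    induction hmn with
    | refl => exact subset_rfl
    | step _ ih => exact ih.trans (by rw [pwoChain]; exact Finset.subset_insert _ _)
  have hfs : ∀ n, φ (pwoChain φ n) ∈ s := fun n => (hφ _ (hTs n)).1
  have hfT : ∀ m n, m < n → φ (pwoChain φ m) ∈ pwoChain φ n := fun m n hmn =>
    hmono (m + 1) n hmn (by rw [pwoChain]; exact Finset.mem_insert_self _ _)
  rcases h.exists_lt (f := fun n => φ (pwoChain φ n)) hfs with ⟨m, n, hmn, hr⟩
  exact (hφ _ (hTs n)).2 _ (hfT m n hmn) hr

/-- **Hemmecke–Weismantel.** Let `V` be a finite-dimensional real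
vector space equipped with a full-rank discrete lattice `Λ`, let `𝒞 ⊆ V` be a
rational polyhedral cone (a finite intersection of half-spaces `{v | ℓᵢ(v) ≤ 0}`
where each `ℓᵢ` takes rational values on `Λ`), let `Q ⊆ V` be a compact subset,
and let `S ⊆ Λ` be a subset with `S ⊆ Q + 𝒞`.  Then there exists a finite set of
elements `s₁, …, s_r ∈ S` such that every element of `S` can be written as
`sᵢ + c` for some index `i` and some `c ∈ 𝒞 ∩ Λ`. -/
theorem lattice_points_in_compact_plus_cone
    {V : Type*} [NormedAddCommGroup V] [NormedSpace ℝ V] [FiniteDimensional ℝ V]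
    (Λ : Submodule ℤ V) [DiscreteTopology Λ] [IsZLattice ℝ Λ]
    (r : ℕ) (ℓ : Fin r → V →ₗ[ℝ] ℝ)
    (hrat : ∀ i : Fin r, ∀ x ∈ Λ, ∃ q : ℚ, ℓ i x = (q : ℝ))
    (C : Set V) (hC : C = {v : V | ∀ i : Fin r, ℓ i v ≤ 0})
    (Q : Set V) (hQ : IsCompact Q)
    (S : Set V) (hSΛ : S ⊆ (Λ : Set V)) (hSQC : S ⊆ Q + C) :
    ∃ t : Finset V, ↑t ⊆ S ∧
      ∀ s ∈ S, ∃ s₀ ∈ t, ∃ c ∈ C ∩ (Λ : Set V), s = s₀ + c := by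
  classical
  -- bounds for `ℓ i` on `Q`
  have hbdd : ∀ i : Fin r, ∃ B : ℝ, ∀ q ∈ Q, ℓ i q ≤ B := by
    intro i
    obtain ⟨B, hB⟩ := (hQ.image (ℓ i).continuous_of_finiteDimensional).bddAbove
    exact ⟨B, fun q hq => hB ⟨q, hq, rfl⟩⟩
  choose B hB using hbdd
  have hlB : ∀ s ∈ S, ∀ i, ℓ i s ≤ B i := by
    intro s hs i
    obtain ⟨q, hq, c, hc, rfl⟩ := Set.mem_add.mp (hSQC hs)
    have hc0 : ℓ i c ≤ 0 := by rw [hC] at hc; exact hc i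
    have := hB i q hq
    rw [map_add]
    linarith
  -- a common denominator for the values of `ℓ i` on `Λ`
  obtain ⟨G, hG⟩ : Λ.FG := Module.Finite.iff_fg.mp (ZLattice.module_finite ℝ Λ)
  let qv : Fin r → V → ℚ := fun i x => if h : x ∈ Λ then (hrat i x h).choose else 0
  have hqv : ∀ i, ∀ x ∈ Λ, ℓ i x = (qv i x : ℝ) := by
    intro i x hx
    simp only [qv, dif_pos hx]
    exact (hrat i x hx).choose_spec
  set D : ℕ := ∏ i : Fin r, ∏ g ∈ G, (qv i g).den with hDdef
  have hD0 : 0 < D :=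
    Finset.prod_pos fun i _ => Finset.prod_pos fun g _ => (qv i g).pos
  have hDR : (0:ℝ) < (D:ℝ) := by exact_mod_cast hD0
  have hdvd : ∀ i : Fin r, ∀ g ∈ G, (qv i g).den ∣ D := fun i g hg =>
    (Finset.dvd_prod_of_mem (fun g => (qv i g).den) hg).trans
      (Finset.dvd_prod_of_mem (fun i => ∏ g ∈ G, (qv i g).den) (Finset.mem_univ i))
  have key : ∀ i : Fin r, ∀ x ∈ Λ, ∃ m : ℤ, (D:ℝ) * ℓ i x = (m:ℝ) := by
    intro i
    have hsub : Λ ≤ Submodule.comap (((D:ℝ) • ℓ i).restrictScalars ℤ)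
        (Submodule.span ℤ {(1:ℝ)}) := by
      rw [← hG, Submodule.span_le]
      intro g hg
      have hgG : g ∈ G := hg
      have hgΛ : g ∈ Λ := by rw [← hG]; exact Submodule.subset_span hg
      obtain ⟨k, hk⟩ := hdvd i g hgG
      refine Submodule.mem_comap.mpr ?_
      rw [Submodule.mem_span_singleton]
      refine ⟨(qv i g).num * k, ?_⟩
      have hden : ((qv i g).den : ℝ) ≠ 0 := by
        exact_mod_cast (qv i g).den_nz
      have hcast : ((qv i g : ℚ) : ℝ) = ((qv i g).num : ℝ) / ((qv i g).den : ℝ) :=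
        by rw [Rat.cast_def]
      simp only [LinearMap.restrictScalars_apply, LinearMap.smul_apply, smul_eq_mul,
        zsmul_eq_mul, mul_one]
      rw [hqv i g hgΛ, hcast, hk]
      push_cast
      field_simp
    intro x hx
    have := hsub hx
    rw [Submodule.mem_comap, Submodule.mem_span_singleton] at this
    obtain ⟨m, hm⟩ := this
    refine ⟨m, ?_⟩
    simpa [smul_eq_mul] using hm.symm
  -- the ℕ-valued invariants
  set N : V → Fin r → ℕ :=
    fun s i => (⌈(D:ℝ) * B i⌉ - ⌊(D:ℝ) * ℓ i s⌋).toNat with hNdef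
  have hfloor : ∀ i, ∀ x ∈ Λ, ((⌊(D:ℝ) * ℓ i x⌋ : ℤ) : ℝ) = (D:ℝ) * ℓ i x := by
    intro i x hx
    obtain ⟨m, hm⟩ := key i x hx
    rw [hm, Int.floor_intCast]
  have hle : ∀ s ∈ S, ∀ i, (⌊(D:ℝ) * ℓ i s⌋ : ℤ) ≤ ⌈(D:ℝ) * B i⌉ := by
    intro s hs i
    have h1 : (D:ℝ) * ℓ i s ≤ (D:ℝ) * B i :=
      mul_le_mul_of_nonneg_left (hlB s hs i) hDR.le
    have h2 : ((⌊(D:ℝ) * ℓ i s⌋ : ℤ) : ℝ) ≤ ((⌈(D:ℝ) * B i⌉ : ℤ) : ℝ) := by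
      rw [hfloor i s (hSΛ hs)]
      exact h1.trans (Int.le_ceil _)
    exact_mod_cast h2
  -- `S` is partially well ordered by the cone preorder, via Dickson's lemma
  have hpwo : S.PartiallyWellOrderedOn (fun a b => N a ≤ N b) := by
    rw [Set.partiallyWellOrderedOn_iff_exists_lt]
    intro f hf
    exact Set.PartiallyWellOrderedOn.exists_lt (Set.isPWO_of_wellQuasiOrderedLE
      (Set.univ : Set (Fin r → ℕ))) (f := fun n => N (f n)) (fun n => Set.mem_univ _)
  obtain ⟨t, htS, ht⟩ := @pwo_exists_basis V ⟨0⟩ _ _ hpwo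
  refine ⟨t, htS, fun s hs => ?_⟩
  obtain ⟨s₁, hs₁t, hN⟩ := ht s hs
  have hs₁S : s₁ ∈ S := htS hs₁t
  refine ⟨s₁, hs₁t, s - s₁, ⟨?_, Submodule.sub_mem Λ (hSΛ hs) (hSΛ hs₁S)⟩, by abel⟩
  rw [hC]
  intro i
  have h1 : N s₁ i ≤ N s i := hN i
  have hb : (⌊(D:ℝ) * ℓ i s⌋ : ℤ) ≤ ⌈(D:ℝ) * B i⌉ := hle s hs i
  have hb₁ : (⌊(D:ℝ) * ℓ i s₁⌋ : ℤ) ≤ ⌈(D:ℝ) * B i⌉ := hle s₁ hs₁S i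
  have h2 : (⌈(D:ℝ) * B i⌉ - ⌊(D:ℝ) * ℓ i s₁⌋ : ℤ) ≤
      (((⌈(D:ℝ) * B i⌉ - ⌊(D:ℝ) * ℓ i s⌋ : ℤ).toNat : ℤ)) := Int.toNat_le.mp h1
  rw [Int.toNat_of_nonneg (by omega)] at h2
  have h4 : ⌊(D:ℝ) * ℓ i s⌋ ≤ ⌊(D:ℝ) * ℓ i s₁⌋ := by omega
  have h5 : (D:ℝ) * ℓ i s ≤ (D:ℝ) * ℓ i s₁ := by
    rw [← hfloor i s (hSΛ hs), ← hfloor i s₁ (hSΛ hs₁S)]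
    exact_mod_cast h4
  have h6 : ℓ i s ≤ ℓ i s₁ := le_of_mul_le_mul_left h5 hDR
  rw [map_sub]
  linarith
end
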